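/- Let (B,W) be a polygonal coloring of the plane with boundary ∂ satisfying condition (C3). Let A be a feasible point lying on the boundary segment s, let B₀ ∈ ∂ with dist(A,B₀) = 1, and let t be the (unique) boundary segment containing B₀. Then s and t are parallel, i.e., the lines containing s and t have the same direction. -/

import Mathlib

open scoped RealInnerProductSpace

noncomputable section

/-- `l` is an (affine) line in the plane: a nonempty one-dimensional affine subspace. -/
def IsLine (l : AffineSubspace ℝ (EuclideanSpace ℝ (Fin 2))) : Prop :=
  (l : Set (EuclideanSpace ℝ (Fin 2))).Nonempty ∧ Module.finrank ℝ l.direction = 1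

/-- A boundary segment: a closed convex subset of some affine line, containing
more than one point (it may be a segment, a ray, or a full line). -/
def IsSeg (s : Set (EuclideanSpace ℝ (Fin 2))) : Prop :=
  IsClosed s ∧ Convex ℝ s ∧ s.Nontrivial ∧
    ∃ l : AffineSubspace ℝ (EuclideanSpace ℝ (Fin 2)), IsLine l ∧ s ⊆ (l : Set _)

/-- `x` is an endpoint of the segment `s`: a point of `s` not in its relative
(intrinsic) interior. -/
def IsEndpoint (x : EuclideanSpace ℝ (Fin 2)) (s : Set (EuclideanSpace ℝ (Fin 2))) : Prop :=
  x ∈ s ∧ x ∉ intrinsicInterior ℝ s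

/-- The coloring `(B, Bᶜ)` is polygonal, with set of boundary segments `S`. -/
structure IsPolygonal (B : Set (EuclideanSpace ℝ (Fin 2)))
    (S : Set (Set (EuclideanSpace ℝ (Fin 2)))) : Prop where
  /-- The black points lie in the closure of the black interior. -/
  black_sub : B ⊆ closure (interior B)
  /-- The white points lie in the closure of the white interior. -/
  white_sub : Bᶜ ⊆ closure (interior Bᶜ)
  /-- Every member of `S` is a boundary segment. -/
  seg : ∀ s ∈ S, IsSeg s
  /-- The boundary of the coloring is the union of the boundary segments. -/
  boundary : frontier B = ⋃₀ S
  /-- Two distinct boundary segments meet in at most one point. -/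
  inter_subsingleton : ∀ s ∈ S, ∀ t ∈ S, s ≠ t → (s ∩ t).Subsingleton
  /-- A common point of two distinct boundary segments is an endpoint of both. -/
  inter_endpoint : ∀ s ∈ S, ∀ t ∈ S, s ≠ t → ∀ x ∈ s ∩ t, IsEndpoint x s ∧ IsEndpoint x t
  /-- No two distinct boundary segments sharing a common point lie on a common line. -/
  no_common_line : ∀ s ∈ S, ∀ t ∈ S, s ≠ t → (s ∩ t).Nonempty →
      ¬∃ l : AffineSubspace ℝ (EuclideanSpace ℝ (Fin 2)),
        IsLine l ∧ s ⊆ (l : Set _) ∧ t ⊆ (l : Set _)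
  /-- Every bounded region meets only finitely many boundary segments. -/
  loc_finite : ∀ R : Set (EuclideanSpace ℝ (Fin 2)), Bornology.IsBounded R →
      {s ∈ S | (s ∩ R).Nonempty}.Finite

/-- Condition (C3): every monochromatic unit triangle has a vertex on the boundary. -/
def C3 (B : Set (EuclideanSpace ℝ (Fin 2))) : Prop :=
  ∀ X Y Z : EuclideanSpace ℝ (Fin 2),
    dist X Y = 1 → dist Y Z = 1 → dist Z X = 1 →
    ((X ∈ B ∧ Y ∈ B ∧ Z ∈ B) ∨ (X ∉ B ∧ Y ∉ B ∧ Z ∉ B)) →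
    X ∈ frontier B ∨ Y ∈ frontier B ∨ Z ∈ frontier B

/-- `x` is a boundary vertex: an endpoint of some boundary segment. -/
def IsVertex (S : Set (Set (EuclideanSpace ℝ (Fin 2)))) (x : EuclideanSpace ℝ (Fin 2)) : Prop :=
  ∃ s ∈ S, IsEndpoint x s

/-- A boundary point `A` is feasible if it is not a boundary vertex and the unit
circle centered at `A` contains no boundary vertex. -/
def Feasible (B : Set (EuclideanSpace ℝ (Fin 2))) (S : Set (Set (EuclideanSpace ℝ (Fin 2))))
    (A : EuclideanSpace ℝ (Fin 2)) : Prop :=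
  A ∈ frontier B ∧ ¬IsVertex S A ∧ ∀ P ∈ Metric.sphere A 1, ¬IsVertex S P

/-- Two segments are parallel: any lines containing them have the same direction. -/
def SegParallel (s t : Set (EuclideanSpace ℝ (Fin 2))) : Prop :=
  ∀ l₁ l₂ : AffineSubspace ℝ (EuclideanSpace ℝ (Fin 2)),
    IsLine l₁ → IsLine l₂ → s ⊆ (l₁ : Set _) → t ⊆ (l₂ : Set _) →
    l₁.direction = l₂.direction

end

/-!
Near a feasible boundary point `P` the coloring is a half-plane: black on one side of the boundary
line through `P`, white on the other. For a unit triangle `XYW` of such points, (C3) forbids every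
small rigid motion (a rotation about `X` by `θ` followed by a translation) that pushes all three
vertices into their black sides, or all into their white sides. If the normals at `X` and `Y` are
transversal, this forces `W` onto the boundary and, comparing the terms of order `sin θ` and
`1 - cos θ`, forces the tangent lines at `X`, `Y`, `W` through one point `Z` and the normal lines
through one point `O`. If the segments through `A` and `B₀` were not parallel, the two triangles of
a unit rhombus `A B₀ P₁ P₂` with a 60° angle would put all its vertices on the circle with diameter
`ZO`, which is impossible since a non-rectangular parallelogram is not cyclic.
-/

open Filter Topology

noncomputable section

local notation "ℝ²" => EuclideanSpace ℝ (Fin 2)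

def rot90 (x : ℝ²) : ℝ² := !₂[-x 1, x 0]

def cross (x y : ℝ²) : ℝ := x 0 * y 1 - x 1 * y 0

@[simp] lemma rot90_apply_zero (x : ℝ²) : rot90 x 0 = -x 1 := rfl
@[simp] lemma rot90_apply_one (x : ℝ²) : rot90 x 1 = x 0 := rfl

lemma inner_eq_coords (x y : ℝ²) : ⟪x, y⟫ = x 0 * y 0 + x 1 * y 1 := by
  simp [PiLp.inner_apply, Fin.sum_univ_two, mul_comm]

lemma inner_rot90_left (x y : ℝ²) : ⟪rot90 x, y⟫ = cross x y := by
  simp only [inner_eq_coords, cross, rot90_apply_zero, rot90_apply_one]; ring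

lemma inner_rot90_right (x y : ℝ²) : ⟪x, rot90 y⟫ = cross y x := by
  simp only [inner_eq_coords, cross, rot90_apply_zero, rot90_apply_one]; ring

lemma inner_rot90_swap (x y : ℝ²) : ⟪x, rot90 y⟫ = -⟪rot90 x, y⟫ := by
  rw [inner_rot90_left, inner_rot90_right]; simp only [cross]; ring

lemma inner_rot90_self (x : ℝ²) : ⟪x, rot90 x⟫ = 0 := by
  rw [inner_rot90_right]; simp only [cross]; ring

lemma rot90_rot90 (x : ℝ²) : rot90 (rot90 x) = -x := by
  ext i; fin_cases i <;> simp [rot90]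

lemma inner_rot90_rot90 (x y : ℝ²) : ⟪rot90 x, rot90 y⟫ = ⟪x, y⟫ := by
  simp only [inner_eq_coords, rot90_apply_zero, rot90_apply_one]; ring

lemma cross_rot90_rot90 (x y : ℝ²) : cross (rot90 x) (rot90 y) = cross x y := by
  simp only [cross, rot90_apply_zero, rot90_apply_one]; ring

lemma cross_neg_neg (x y : ℝ²) : cross (-x) (-y) = cross x y := by
  simp only [cross, PiLp.neg_apply]; ring

lemma norm_rot90 (x : ℝ²) : ‖rot90 x‖ = ‖x‖ := by
  rw [← sq_eq_sq₀ (norm_nonneg _) (norm_nonneg _), ← real_inner_self_eq_norm_sq,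
    ← real_inner_self_eq_norm_sq, inner_rot90_rot90]

lemma rot90_ne_zero {x : ℝ²} (hx : x ≠ 0) : rot90 x ≠ 0 := by
  rwa [← norm_ne_zero_iff, norm_rot90, norm_ne_zero_iff]

lemma rot90_sub (x y : ℝ²) : rot90 (x - y) = rot90 x - rot90 y := by
  ext i; fin_cases i <;> simp [rot90]; ring

/-- Cramer's rule in the plane. -/
lemma cross_mul_inner_add_cross_mul_inner_add_cross_mul_inner (a b c z : ℝ²) :
    cross b c * ⟪z, a⟫ + cross c a * ⟪z, b⟫ + cross a b * ⟪z, c⟫ = 0 := by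
  simp only [cross, inner_eq_coords]; ring

lemma exists_eq_smul_rot90 {v n : ℝ²} (hn : n ≠ 0) (h : ⟪v, n⟫ = 0) :
    ∃ c : ℝ, v = c • rot90 n := by
  have hnn : n 0 ^ 2 + n 1 ^ 2 ≠ 0 := by
    rw [← inner_self_ne_zero (𝕜 := ℝ), inner_eq_coords] at hn; convert hn using 1; ring
  refine ⟨-cross v n / (n 0 ^ 2 + n 1 ^ 2), ?_⟩
  rw [inner_eq_coords] at h
  ext i; fin_cases i <;> simp [cross] <;> field_simp
  · linear_combination n 0 * h
  · linear_combination n 1 * h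

lemma inner_eq_zero_of_cross_eq_zero {v n m : ℝ²} (hn : n ≠ 0) (h : ⟪v, n⟫ = 0)
    (hnm : cross n m = 0) : ⟪v, m⟫ = 0 := by
  obtain ⟨c, rfl⟩ := exists_eq_smul_rot90 hn h
  rw [real_inner_smul_left, inner_rot90_left, hnm, mul_zero]

lemma eq_zero_of_inner_eq_zero_of_inner_rot90_eq_zero {v n : ℝ²} (hn : n ≠ 0)
    (h : ⟪v, n⟫ = 0) (h' : ⟪v, rot90 n⟫ = 0) : v = 0 := by
  obtain ⟨c, rfl⟩ := exists_eq_smul_rot90 hn h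
  rw [real_inner_smul_left, real_inner_self_eq_norm_sq, norm_rot90] at h'
  simp [(mul_eq_zero.1 h').resolve_right (by positivity)]

def solveInner (a b : ℝ²) (r₁ r₂ : ℝ) : ℝ² := (cross a b)⁻¹ • (r₂ • rot90 a - r₁ • rot90 b)

lemma inner_solveInner_left {a b : ℝ²} (h : cross a b ≠ 0) (r₁ r₂ : ℝ) :
    ⟪solveInner a b r₁ r₂, a⟫ = r₁ := by
  simp only [solveInner, real_inner_smul_left, inner_sub_left, inner_rot90_left]
  simp only [cross] at h ⊢; field_simp; ring

lemma inner_solveInner_right {a b : ℝ²} (h : cross a b ≠ 0) (r₁ r₂ : ℝ) :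
    ⟪solveInner a b r₁ r₂, b⟫ = r₂ := by
  simp only [solveInner, real_inner_smul_left, inner_sub_left, inner_rot90_left]
  simp only [cross] at h ⊢; field_simp; ring

lemma norm_smul_add_smul_rot90 (a b : ℝ) (u : ℝ²) :
    ‖a • u + b • rot90 u‖ ^ 2 = (a ^ 2 + b ^ 2) * ‖u‖ ^ 2 := by
  simp only [← real_inner_self_eq_norm_sq, inner_add_left, inner_add_right, real_inner_smul_left,
    real_inner_smul_right, inner_rot90_rot90, inner_rot90_self, real_inner_comm u (rot90 u)]
  ring

lemma exists_norm_eq_one_and_norm_sub_eq_one {u : ℝ²} (hu : ‖u‖ = 1) :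
    ∃ v : ℝ², ‖v‖ = 1 ∧ ‖v - u‖ = 1 := by
  refine ⟨(1 / 2 : ℝ) • u + (√3 / 2) • rot90 u, ?_, ?_⟩ <;>
    rw [← pow_eq_one_iff_of_nonneg (norm_nonneg _) two_ne_zero]
  · rw [norm_smul_add_smul_rot90, hu]; norm_num; ring_nf; norm_num
  · rw [show (1 / 2 : ℝ) • u + (√3 / 2) • rot90 u - u = (-1 / 2 : ℝ) • u + (√3 / 2) • rot90 u by
      module, norm_smul_add_smul_rot90, hu]
    norm_num; ring_nf; norm_num

def rotate (θ : ℝ) (u : ℝ²) : ℝ² := Real.cos θ • u + Real.sin θ • rot90 u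

lemma norm_rotate (θ : ℝ) (u : ℝ²) : ‖rotate θ u‖ = ‖u‖ := by
  rw [← sq_eq_sq₀ (norm_nonneg _) (norm_nonneg _), rotate, norm_smul_add_smul_rot90,
    Real.cos_sq_add_sin_sq, one_mul]

lemma rotate_sub (θ : ℝ) (u v : ℝ²) : rotate θ (u - v) = rotate θ u - rotate θ v := by
  simp only [rotate, rot90_sub, smul_sub]; abel

lemma rotate_zero (θ : ℝ) : rotate θ 0 = 0 := by
  simpa using rotate_sub θ 0 0

lemma false_of_rhombus_on_thales_circle {V : Type*} [NormedAddCommGroup V] [InnerProductSpace ℝ V]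
    {Z O A u v : V} (hu : ‖u‖ = 1) (hv : ‖v‖ = 1) (huv : ‖v - u‖ = 1)
    (hA : ⟪Z - A, O - A⟫ = 0) (h₀ : ⟪Z - (A + u), O - (A + u)⟫ = 0)
    (h₁ : ⟪Z - (A + v), O - (A + v)⟫ = 0) (h₂ : ⟪Z - (A + (v - u)), O - (A + (v - u))⟫ = 0) :
    False := by
  have key : ∀ x : V, ⟪Z - (A + x), O - (A + x)⟫ =
      ⟪Z - A, O - A⟫ - ⟪Z - A, x⟫ - ⟪O - A, x⟫ + ‖x‖ ^ 2 := by
    intro x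
    rw [show Z - (A + x) = (Z - A) - x by abel, show O - (A + x) = (O - A) - x by abel]
    generalize Z - A = z; generalize O - A = o
    rw [inner_sub_left, inner_sub_right, inner_sub_right, real_inner_self_eq_norm_sq,
      real_inner_comm x o]
    ring
  rw [key, hu] at h₀
  rw [key, hv] at h₁
  rw [key, huv, inner_sub_right (Z - A) v u, inner_sub_right (O - A) v u] at h₂
  linarith

variable {B : Set ℝ²}

structure LocallyHalfPlane (B : Set ℝ²) (P n : ℝ²) : Prop where
  ne_zero : n ≠ 0
  eventually_mem_interior : ∀ᶠ y in 𝓝 P, 0 < ⟪y - P, n⟫ → y ∈ interior B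
  eventually_mem_interior_compl : ∀ᶠ y in 𝓝 P, ⟪y - P, n⟫ < 0 → y ∈ interior Bᶜ

lemma LocallyHalfPlane.compl {P n : ℝ²} (h : LocallyHalfPlane B P n) :
    LocallyHalfPlane Bᶜ P (-n) where
  ne_zero := neg_ne_zero.2 h.ne_zero
  eventually_mem_interior := h.eventually_mem_interior_compl.mono fun y hy hpos =>
    hy (by rwa [inner_neg_right, neg_pos] at hpos)
  eventually_mem_interior_compl := h.eventually_mem_interior.mono fun y hy hneg => by
    rw [compl_compl]; exact hy (by rwa [inner_neg_right, neg_lt_zero] at hneg)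

lemma C3.compl (h : C3 B) : C3 Bᶜ := by
  intro X Y Z hXY hYZ hZX hmono
  simp only [Set.mem_compl_iff, not_not] at hmono
  simpa only [frontier_compl] using h X Y Z hXY hYZ hZX hmono.symm

lemma C3.false_of_mem_interior (hC3 : C3 B) {X Y Z : ℝ²} (hXY : dist X Y = 1)
    (hYZ : dist Y Z = 1) (hZX : dist Z X = 1) (hX : X ∈ interior B) (hY : Y ∈ interior B)
    (hZ : Z ∈ interior B) : False := by
  have hfr : ∀ {x}, x ∈ interior B → x ∉ frontier B := fun hx hfx => hfx.2 hx
  rcases hC3 X Y Z hXY hYZ hZX (.inl ⟨interior_subset hX, interior_subset hY, interior_subset hZ⟩)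
    with h | h | h
  exacts [hfr hX h, hfr hY h, hfr hZ h]

/-- Translating the triangle slightly into the black sides at `X` and `Y` would make it
monochromatic. -/
lemma C3.not_mem_interior_of_cross_ne_zero (hC3 : C3 B) {X Y W nX nY : ℝ²}
    (hX : LocallyHalfPlane B X nX) (hY : LocallyHalfPlane B Y nY) (hcross : cross nX nY ≠ 0)
    (hXY : dist X Y = 1) (hYW : dist Y W = 1) (hWX : dist W X = 1) : W ∉ interior B := by
  intro hW
  set v := solveInner nX nY 1 1
  have hmove (Q : ℝ²) : Tendsto (fun τ : ℝ => Q + τ • v) (𝓝[>] 0) (𝓝 Q) :=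
    tendsto_nhdsWithin_of_tendsto_nhds (Continuous.tendsto' (by fun_prop) _ _ (by simp))
  obtain ⟨τ, hτ, hX', hY', hW'⟩ := (eventually_mem_nhdsWithin.and <|
    ((hmove X).eventually hX.eventually_mem_interior).and <|
    ((hmove Y).eventually hY.eventually_mem_interior).and <|
    (hmove W).eventually (isOpen_interior.mem_nhds hW)).exists
  have hoff {Q n : ℝ²} (h : ⟪v, n⟫ = 1) : 0 < ⟪Q + τ • v - Q, n⟫ := by
    simpa [real_inner_smul_left, h] using Set.mem_Ioi.1 hτ
  exact hC3.false_of_mem_interior (by simpa using hXY) (by simpa using hYW) (by simpa using hWX)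
    (hX' (hoff (inner_solveInner_left hcross 1 1)))
    (hY' (hoff (inner_solveInner_right hcross 1 1))) hW'

lemma C3.mem_frontier_of_cross_ne_zero (hC3 : C3 B) {X Y W nX nY : ℝ²}
    (hX : LocallyHalfPlane B X nX) (hY : LocallyHalfPlane B Y nY) (hcross : cross nX nY ≠ 0)
    (hXY : dist X Y = 1) (hYW : dist Y W = 1) (hWX : dist W X = 1) : W ∈ frontier B := by
  have hB := hC3.not_mem_interior_of_cross_ne_zero hX hY hcross hXY hYW hWX
  have hBc := hC3.compl.not_mem_interior_of_cross_ne_zero hX.compl hY.compl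
    (by rwa [cross_neg_neg]) hXY hYW hWX
  rw [interior_compl, Set.notMem_compl_iff] at hBc
  exact ⟨hBc, hB⟩

/-- Rotate the triangle about `X` by `θ`, then translate it so that `X` and `Y` enter their black
sides by the same amount `δ θ`; by Cramer's rule the offset of `W` then has the sign of `γ * D θ`,
so (C3) forbids `γ * D θ > 0`. -/
lemma C3.eventually_cross_mul_nonpos (hC3 : C3 B) {X Y W nX nY nW : ℝ²}
    (hX : LocallyHalfPlane B X nX) (hY : LocallyHalfPlane B Y nY)
    (hW : LocallyHalfPlane B W nW) (hcross : cross nX nY ≠ 0)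
    (hXY : dist X Y = 1) (hYW : dist Y W = 1) (hWX : dist W X = 1) :
    ∀ᶠ θ in 𝓝 (0 : ℝ), cross nX nY * (cross nW nX * ⟪rotate θ (Y - X) - (Y - X), nY⟫ +
      cross nX nY * ⟪rotate θ (W - X) - (W - X), nW⟫) ≤ 0 := by
  set α := cross nY nW
  set β := cross nW nX
  set γ := cross nX nY
  set off : ℝ² → ℝ² → ℝ → ℝ := fun Q n θ => ⟪rotate θ (Q - X) - (Q - X), n⟫
  set D : ℝ → ℝ := fun θ => β * off Y nY θ + γ * off W nW θ
  set κ := (1 + |(α + β) * γ|)⁻¹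
  set δ : ℝ → ℝ := fun θ => κ * (γ * D θ)
  set w : ℝ → ℝ² := fun θ => solveInner nX nY (δ θ) (δ θ - off Y nY θ)
  set move : ℝ → ℝ² → ℝ² := fun θ Q => X + w θ + rotate θ (Q - X)
  have hmove (Q : ℝ²) : Tendsto (fun θ => move θ Q) (𝓝 0) (𝓝 Q) := by
    refine Continuous.tendsto' ?_ _ _ ?_
    · simp only [move, w, δ, D, off, solveInner, rotate]; fun_prop
    · simp [move, w, δ, D, off, solveInner, rotate]
  have hdist (θ : ℝ) {Q Q' : ℝ²} (h : dist Q Q' = 1) : dist (move θ Q) (move θ Q') = 1 := by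
    have : move θ Q - move θ Q' = rotate θ (Q - Q') := by
      rw [show Q - Q' = (Q - X) - (Q' - X) by abel, rotate_sub]; simp only [move]; abel
    rw [dist_eq_norm, this, norm_rotate, ← dist_eq_norm, h]
  filter_upwards [(hmove X).eventually hX.eventually_mem_interior,
    (hmove Y).eventually hY.eventually_mem_interior,
    (hmove W).eventually hW.eventually_mem_interior] with θ hX' hY' hW'
  by_contra! hpos
  have hκ : 0 < κ := by positivity
  have hδ : 0 < δ θ := mul_pos hκ hpos
  have hoff (Q n : ℝ²) : ⟪move θ Q - Q, n⟫ = ⟪w θ, n⟫ + off Q n θ := by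
    rw [← inner_add_left]; congr 1; simp only [move]; abel
  have hoffX : ⟪move θ X - X, nX⟫ = δ θ := by
    simp [hoff, off, w, inner_solveInner_left hcross, rotate_zero]
  have hoffY : ⟪move θ Y - Y, nY⟫ = δ θ := by
    rw [hoff, inner_solveInner_right hcross]; ring
  have hoffW : γ * ⟪move θ W - W, nW⟫ = (1 - κ * ((α + β) * γ)) * D θ := by
    have := cross_mul_inner_add_cross_mul_inner_add_cross_mul_inner nX nY nW (w θ)
    rw [inner_solveInner_left hcross, inner_solveInner_right hcross] at this
    rw [hoff]
    simp only [D, δ] at this ⊢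
    linear_combination this
  have hκ' : 0 < 1 - κ * ((α + β) * γ) := by
    have : κ * |(α + β) * γ| < 1 := by
      rw [← div_eq_inv_mul, div_lt_one (by positivity)]; linarith
    linarith [mul_le_mul_of_nonneg_left (le_abs_self ((α + β) * γ)) hκ.le]
  have hoffW' : 0 < ⟪move θ W - W, nW⟫ := by
    refine pos_of_mul_pos_right (a := γ * γ) ?_ (mul_self_nonneg γ)
    rw [mul_assoc, hoffW]; nlinarith
  exact hC3.false_of_mem_interior (hdist θ hXY) (hdist θ hYW) (hdist θ hWX)
    (hX' (hoffX ▸ hδ)) (hY' (hoffY ▸ hδ)) (hW' hoffW')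

lemma C3.eventually_cross_mul_add_cross_mul_eq_zero (hC3 : C3 B) {X Y W nX nY nW : ℝ²}
    (hX : LocallyHalfPlane B X nX) (hY : LocallyHalfPlane B Y nY)
    (hW : LocallyHalfPlane B W nW) (hcross : cross nX nY ≠ 0)
    (hXY : dist X Y = 1) (hYW : dist Y W = 1) (hWX : dist W X = 1) :
    ∀ᶠ θ in 𝓝 (0 : ℝ), cross nW nX * ⟪rotate θ (Y - X) - (Y - X), nY⟫ +
      cross nX nY * ⟪rotate θ (W - X) - (W - X), nW⟫ = 0 := by
  have hBc := hC3.compl.eventually_cross_mul_nonpos hX.compl hY.compl hW.compl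
    (by rwa [cross_neg_neg]) hXY hYW hWX
  simp only [cross_neg_neg, inner_neg_right] at hBc
  filter_upwards [hC3.eventually_cross_mul_nonpos hX hY hW hcross hXY hYW hWX, hBc] with θ h₁ h₂
  exact (mul_eq_zero.1 (by linarith)).resolve_left hcross

lemma inner_rotate_sub_self (θ : ℝ) (u n : ℝ²) :
    ⟪rotate θ u - u, n⟫ = Real.sin θ * ⟪rot90 u, n⟫ + (Real.cos θ - 1) * ⟪u, n⟫ := by
  simp only [rotate, inner_sub_left, inner_add_left, real_inner_smul_left]; ring

lemma eq_zero_and_eq_zero_of_eventually_sin_mul_add {a b : ℝ}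
    (h : ∀ᶠ θ in 𝓝 (0 : ℝ), Real.sin θ * a + (Real.cos θ - 1) * b = 0) : a = 0 ∧ b = 0 := by
  obtain ⟨ε, hε, hball⟩ := Metric.eventually_nhds_iff.1 h
  set θ := min (ε / 2) 1
  have hθ : 0 < θ := by positivity
  have hθε : |θ| < ε := by rw [abs_of_pos hθ]; linarith [min_le_left (ε / 2) 1]
  have hθπ : θ < Real.pi := by linarith [min_le_right (ε / 2) 1, Real.pi_gt_three]
  have hpos := hball (y := θ) (by simpa using hθε)
  have hneg := hball (y := -θ) (by simpa using hθε)
  rw [Real.sin_neg, Real.cos_neg] at hneg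
  have hsin : 0 < Real.sin θ := Real.sin_pos_of_pos_of_lt_pi hθ hθπ
  have hcos : Real.cos θ < 1 := by
    simpa using Real.cos_lt_cos_of_nonneg_of_le_pi le_rfl hθπ.le hθ
  constructor <;> nlinarith

lemma inner_sub_eq_zero_of_cross_ne_zero {a b c X Y W Z : ℝ²} (hab : cross a b ≠ 0)
    (hX : ⟪Z - X, a⟫ = 0) (hY : ⟪Z - Y, b⟫ = 0)
    (h : cross c a * ⟪Y - X, b⟫ + cross a b * ⟪W - X, c⟫ = 0) : ⟪Z - W, c⟫ = 0 := by
  have hcramer := cross_mul_inner_add_cross_mul_inner_add_cross_mul_inner a b c (Z - X)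
  rw [show Z - W = (Z - X) - (W - X) by abel, inner_sub_left]
  rw [show Y - X = (Z - X) - (Z - Y) by abel, inner_sub_left, hY] at h
  refine (mul_eq_zero.1 ?_).resolve_left hab
  linear_combination hcramer - cross b c * hX - h

/-- `Z` lies on the tangent line at `P` (orthogonal to `n`) and `O` on the normal line. -/
def TangentNormalThrough (Z O P n : ℝ²) : Prop := ⟪Z - P, n⟫ = 0 ∧ ⟪O - P, rot90 n⟫ = 0

lemma exists_tangentNormalThrough {a b : ℝ²} (h : cross a b ≠ 0) (P Q : ℝ²) :
    ∃ Z O, TangentNormalThrough Z O P a ∧ TangentNormalThrough Z O Q b := by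
  have h' : cross (rot90 a) (rot90 b) ≠ 0 := by rwa [cross_rot90_rot90]
  refine ⟨solveInner a b ⟪P, a⟫ ⟪Q, b⟫,
    solveInner (rot90 a) (rot90 b) ⟪P, rot90 a⟫ ⟪Q, rot90 b⟫, ⟨?_, ?_⟩, ?_, ?_⟩ <;>
  simp [inner_sub_left, inner_solveInner_left, inner_solveInner_right, h, h']

lemma TangentNormalThrough.inner_eq_zero {Z O P n : ℝ²} (h : TangentNormalThrough Z O P n)
    (hn : n ≠ 0) : ⟪Z - P, O - P⟫ = 0 := by
  obtain ⟨c, hc⟩ := exists_eq_smul_rot90 hn h.1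
  rw [hc, real_inner_smul_left, real_inner_comm, h.2, mul_zero]

lemma TangentNormalThrough.eq_of_cross_eq_zero {Z O P Q n m : ℝ²}
    (hP : TangentNormalThrough Z O P n) (hQ : TangentNormalThrough Z O Q m) (hn : n ≠ 0)
    (hm : m ≠ 0) (h : cross n m = 0) : P = Q := by
  have h₁ := inner_eq_zero_of_cross_eq_zero hn hP.1 h
  have h₂ := inner_eq_zero_of_cross_eq_zero (rot90_ne_zero hn) hP.2
    (by rwa [cross_rot90_rot90])
  rw [← sub_eq_zero]
  refine eq_zero_of_inner_eq_zero_of_inner_rot90_eq_zero hm ?_ ?_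
  · rw [show P - Q = (Z - Q) - (Z - P) by abel, inner_sub_left, hQ.1, h₁, sub_zero]
  · rw [show P - Q = (O - Q) - (O - P) by abel, inner_sub_left, hQ.2, h₂, sub_zero]

lemma C3.tangentNormalThrough (hC3 : C3 B) {X Y W nX nY nW Z O : ℝ²}
    (hX : LocallyHalfPlane B X nX) (hY : LocallyHalfPlane B Y nY)
    (hW : LocallyHalfPlane B W nW) (hcross : cross nX nY ≠ 0)
    (hXY : dist X Y = 1) (hYW : dist Y W = 1) (hWX : dist W X = 1)
    (hZOX : TangentNormalThrough Z O X nX) (hZOY : TangentNormalThrough Z O Y nY) :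
    TangentNormalThrough Z O W nW := by
  have h := hC3.eventually_cross_mul_add_cross_mul_eq_zero hX hY hW hcross hXY hYW hWX
  simp only [inner_rotate_sub_self] at h
  obtain ⟨hrot, htr⟩ := eq_zero_and_eq_zero_of_eventually_sin_mul_add
    (a := cross nW nX * ⟪rot90 (Y - X), nY⟫ + cross nX nY * ⟪rot90 (W - X), nW⟫)
    (b := cross nW nX * ⟪Y - X, nY⟫ + cross nX nY * ⟪W - X, nW⟫)
    (h.mono fun θ hθ => by linear_combination hθ)
  refine ⟨inner_sub_eq_zero_of_cross_ne_zero hcross hZOX.1 hZOY.1 htr,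
    inner_sub_eq_zero_of_cross_ne_zero (by rwa [cross_rot90_rot90]) hZOX.2 hZOY.2 ?_⟩
  rw [cross_rot90_rot90, cross_rot90_rot90, inner_rot90_swap, inner_rot90_swap]
  linear_combination -hrot

lemma IsLine.direction_eq_span {l : AffineSubspace ℝ ℝ²} (hl : IsLine l) {x y : ℝ²} (hx : x ∈ l)
    (hy : y ∈ l) (hxy : x ≠ y) : l.direction = ℝ ∙ (y - x) := by
  refine (Submodule.eq_of_le_of_finrank_le ?_ ?_).symm
  · rw [Submodule.span_le, Set.singleton_subset_iff]
    exact AffineSubspace.vsub_mem_direction hy hx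
  · rw [hl.2, finrank_span_singleton (sub_ne_zero.2 hxy.symm)]

lemma eventually_mem_of_mem_intrinsicInterior {E : Type*} [NormedAddCommGroup E]
    [NormedSpace ℝ E] {s : Set E} {P : E} (hP : P ∈ intrinsicInterior ℝ s) :
    ∀ᶠ y in 𝓝 P, y ∈ affineSpan ℝ s → y ∈ s := by
  obtain ⟨z, hz, rfl⟩ := hP
  obtain ⟨u, hu, hus⟩ := (mem_nhds_subtype _ _ _).1 (mem_interior_iff_mem_nhds.1 hz)
  filter_upwards [hu] with y hyu hyA
  exact hus (show (⟨y, hyA⟩ : affineSpan ℝ s) ∈ Subtype.val ⁻¹' u from hyu)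

lemma IsSeg.exists_normal {s : Set ℝ²} (hs : IsSeg s) {P : ℝ²}
    (hP : P ∈ intrinsicInterior ℝ s) : ∃ n ≠ 0, (∀ y ∈ s, ⟪y - P, n⟫ = 0) ∧
      ∀ᶠ y in 𝓝 P, ⟪y - P, n⟫ = 0 → y ∈ s := by
  obtain ⟨-, -, ⟨y₀, hy₀, x₀, hx₀, hne⟩, l, hl, hsl⟩ := hs
  have hPs : P ∈ s := intrinsicInterior_subset hP
  have hd : y₀ - x₀ ≠ 0 := sub_ne_zero.2 hne
  have hdir := hl.direction_eq_span (hsl hx₀) (hsl hy₀) (Ne.symm hne)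
  refine ⟨rot90 (y₀ - x₀), rot90_ne_zero hd, fun y hy => ?_, ?_⟩
  · have hyP : y - P ∈ l.direction := AffineSubspace.vsub_mem_direction (hsl hy) (hsl hPs)
    obtain ⟨c, hc⟩ := Submodule.mem_span_singleton.1 (hdir ▸ hyP)
    rw [← hc, real_inner_smul_left, inner_rot90_self, mul_zero]
  · filter_upwards [eventually_mem_of_mem_intrinsicInterior hP] with y hy hperp
    refine hy ?_
    obtain ⟨c, hc⟩ := exists_eq_smul_rot90 (rot90_ne_zero hd) hperp
    rw [rot90_rot90] at hc
    have hdA : y₀ - x₀ ∈ (affineSpan ℝ s).direction :=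
      AffineSubspace.vsub_mem_direction (mem_affineSpan ℝ hy₀) (mem_affineSpan ℝ hx₀)
    rw [show y = (-c) • (y₀ - x₀) +ᵥ P by rw [vadd_eq_add, neg_smul, ← smul_neg, ← hc]; abel]
    exact AffineSubspace.vadd_mem_of_mem_direction
      ((affineSpan ℝ s).direction.smul_mem (-c) hdA) (mem_affineSpan ℝ hPs)

lemma IsPolygonal.eventually_mem_frontier_iff {S : Set (Set ℝ²)} (hpoly : IsPolygonal B S)
    {P : ℝ²} (hP : ¬IsVertex S P) {s : Set ℝ²} (hs : s ∈ S) (hPs : P ∈ s) :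
    ∀ᶠ y in 𝓝 P, y ∈ frontier B ↔ y ∈ s := by
  set F := {r ∈ S | (r ∩ Metric.ball P 1).Nonempty} \ {s}
  have hF : IsClosed (⋃₀ F) := by
    rw [Set.sUnion_eq_biUnion]
    exact (hpoly.loc_finite _ Metric.isBounded_ball).sdiff.isClosed_biUnion
      fun r hr => (hpoly.seg r hr.1.1).1
  have hPF : P ∉ ⋃₀ F := by
    rintro ⟨r, ⟨⟨hr, -⟩, hrs⟩, hPr⟩
    exact hP ⟨r, hr, (hpoly.inter_endpoint r hr s hs hrs P ⟨hPr, hPs⟩).1⟩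
  filter_upwards [hF.isOpen_compl.mem_nhds hPF, Metric.ball_mem_nhds P one_pos] with y hyF hy
  rw [hpoly.boundary]
  refine ⟨fun ⟨r, hr, hyr⟩ => ?_, fun hys => ⟨s, hs, hys⟩⟩
  by_contra hys
  exact hyF ⟨r, ⟨⟨hr, y, hyr, hy⟩, fun h => hys (h ▸ hyr)⟩, hyr⟩

lemma IsPolygonal.frontier_subset_closure_interior {S : Set (Set ℝ²)} (hpoly : IsPolygonal B S) :
    frontier B ⊆ closure (interior B) ∩ closure (interior Bᶜ) := by
  rw [frontier_eq_closure_inter_closure]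
  exact Set.inter_subset_inter (closure_minimal hpoly.black_sub isClosed_closure)
    (closure_minimal hpoly.white_sub isClosed_closure)

lemma halfBall_subset_interior_or {E : Type*} [NormedAddCommGroup E] [InnerProductSpace ℝ E]
    {U : Set E} {P n : E} {ε : ℝ} (hfr : ∀ y ∈ Metric.ball P ε, y ∈ frontier U → ⟪y - P, n⟫ = 0) :
    Metric.ball P ε ∩ {y | 0 < ⟪y - P, n⟫} ⊆ interior U ∨
      Metric.ball P ε ∩ {y | 0 < ⟪y - P, n⟫} ⊆ interior Uᶜ := by
  have hconv : Convex ℝ {y : E | 0 < ⟪y - P, n⟫} := by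
    simpa only [innerₛₗ_apply_apply, inner_sub_left, inner_sub_right, sub_pos,
      real_inner_comm n] using convex_halfSpace_gt (innerₛₗ ℝ n).isLinear ⟪n, P⟫
  refine ((convex_ball P ε).inter hconv).isPreconnected.subset_or_subset isOpen_interior
    isOpen_interior (Set.disjoint_left.2 fun y hy hy' => interior_subset hy' (interior_subset hy))
    fun y ⟨hy, hpos⟩ => ?_
  by_contra h
  have hfy : y ∈ frontier U := by
    rw [interior_compl, Set.mem_union, not_or, Set.notMem_compl_iff] at h
    exact ⟨h.2, h.1⟩
  exact hpos.ne' (hfr y hy hfy)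

lemma LocallyHalfPlane.of_halfBall_subset {P n : ℝ²} {ε : ℝ} (hε : 0 < ε) (hn : n ≠ 0)
    (h : Metric.ball P ε ∩ {y | 0 < ⟪y - P, n⟫} ⊆ interior B)
    (h' : Metric.ball P ε ∩ {y | 0 < ⟪y - P, -n⟫} ⊆ interior Bᶜ) : LocallyHalfPlane B P n := by
  refine ⟨hn, ?_, ?_⟩ <;> filter_upwards [Metric.ball_mem_nhds P hε] with y hy hside
  · exact h ⟨hy, hside⟩
  · exact h' ⟨hy, by rwa [Set.mem_ofPred_eq, inner_neg_right, neg_pos]⟩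

lemma locallyHalfPlane_or_neg_of_eventually {P n : ℝ²} (hn : n ≠ 0)
    (hfr : ∀ᶠ y in 𝓝 P, y ∈ frontier B ↔ ⟪y - P, n⟫ = 0)
    (hB : P ∈ closure (interior B)) (hW : P ∈ closure (interior Bᶜ)) :
    LocallyHalfPlane B P n ∨ LocallyHalfPlane B P (-n) := by
  obtain ⟨ε, hε, hball⟩ := Metric.eventually_nhds_iff.1 hfr
  set H : ℝ² → Set ℝ² := fun m => Metric.ball P ε ∩ {y | 0 < ⟪y - P, m⟫}
  have hH : ∀ m ∈ ({n, -n} : Set ℝ²), H m ⊆ interior B ∨ H m ⊆ interior Bᶜ := by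
    rintro m (rfl | rfl) <;> refine halfBall_subset_interior_or fun y hy hfy => ?_
    · exact (hball hy).1 hfy
    · rw [inner_neg_right, (hball hy).1 hfy, neg_zero]
  have hmeet {C : Set ℝ²} (hC : P ∈ closure (interior C)) (hCfr : C = B ∨ C = Bᶜ) :
      ∃ z ∈ interior C, z ∈ H n ∪ H (-n) := by
    obtain ⟨z, hzC, hz⟩ := Metric.mem_closure_iff.1 hC ε hε
    rw [dist_comm] at hz
    refine ⟨z, hzC, ?_⟩
    have hzfr : z ∉ frontier B := by
      rcases hCfr with rfl | rfl
      exacts [disjoint_interior_frontier.notMem_of_mem_left hzC,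
        frontier_compl B ▸ disjoint_interior_frontier.notMem_of_mem_left hzC]
    rcases lt_trichotomy ⟪z - P, n⟫ 0 with h | h | h
    · exact .inr ⟨hz, by rwa [Set.mem_ofPred_eq, inner_neg_right, neg_pos]⟩
    · exact (hzfr ((hball hz).2 h)).elim
    · exact .inl ⟨hz, h⟩
  have hdisj : Disjoint (interior B) (interior Bᶜ) :=
    Set.disjoint_left.2 fun y hy hy' => interior_subset hy' (interior_subset hy)
  obtain ⟨zB, hzB, hzBH⟩ := hmeet hB (.inl rfl)
  obtain ⟨zW, hzW, hzWH⟩ := hmeet hW (.inr rfl)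
  rcases hH n (.inl rfl) with h₁ | h₁ <;> rcases hH (-n) (.inr rfl) with h₂ | h₂
  · exact (Set.disjoint_left.1 hdisj (hzWH.elim (h₁ ·) (h₂ ·)) hzW).elim
  · exact .inl (.of_halfBall_subset hε hn h₁ h₂)
  · exact .inr (.of_halfBall_subset hε (neg_ne_zero.2 hn) h₂ (by rwa [neg_neg]))
  · exact (Set.disjoint_left.1 hdisj hzB (hzBH.elim (h₁ ·) (h₂ ·))).elim

lemma IsPolygonal.exists_locallyHalfPlane {S : Set (Set ℝ²)} (hpoly : IsPolygonal B S) {P : ℝ²}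
    (hP : P ∈ frontier B) (hv : ¬IsVertex S P) {s : Set ℝ²} (hs : s ∈ S) (hPs : P ∈ s) :
    ∃ n, LocallyHalfPlane B P n ∧ ∀ y ∈ s, ⟪y - P, n⟫ = 0 := by
  have hint : P ∈ intrinsicInterior ℝ s := by
    by_contra h
    exact hv ⟨s, hs, hPs, h⟩
  obtain ⟨n, hn, hsn, hns⟩ := (hpoly.seg s hs).exists_normal hint
  have hfr : ∀ᶠ y in 𝓝 P, y ∈ frontier B ↔ ⟪y - P, n⟫ = 0 := by
    filter_upwards [hpoly.eventually_mem_frontier_iff hv hs hPs, hns] with y h₁ h₂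
    rw [h₁]
    exact ⟨hsn y, h₂⟩
  obtain ⟨hB, hW⟩ := hpoly.frontier_subset_closure_interior hP
  rcases locallyHalfPlane_or_neg_of_eventually hn hfr hB hW with h | h
  · exact ⟨n, h, hsn⟩
  · exact ⟨-n, h, fun y hy => by rw [inner_neg_right, hsn y hy, neg_zero]⟩

lemma IsLine.direction_eq_span_rot90 {l : AffineSubspace ℝ ℝ²} (hl : IsLine l) {s : Set ℝ²}
    (hs : s.Nontrivial) (hsl : s ⊆ l) {P n : ℝ²} (hn : n ≠ 0) (hsn : ∀ y ∈ s, ⟪y - P, n⟫ = 0) :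
    l.direction = ℝ ∙ rot90 n := by
  obtain ⟨y, hy, x, hx, hne⟩ := hs
  rw [hl.direction_eq_span (hsl hx) (hsl hy) hne.symm]
  have h : ⟪y - x, n⟫ = 0 := by
    rw [show y - x = (y - P) - (x - P) by abel, inner_sub_left, hsn y hy, hsn x hx, sub_zero]
  obtain ⟨c, hc⟩ := exists_eq_smul_rot90 hn h
  have hc0 : c ≠ 0 := by
    rintro rfl
    exact hne (sub_eq_zero.1 (by simpa using hc))
  rw [hc, Submodule.span_singleton_smul_eq (isUnit_iff_ne_zero.2 hc0)]

lemma segParallel_of_cross_eq_zero {s t : Set ℝ²} (hs : IsSeg s) (ht : IsSeg t) {P Q n m : ℝ²}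
    (hn : n ≠ 0) (hm : m ≠ 0) (hsn : ∀ y ∈ s, ⟪y - P, n⟫ = 0) (htm : ∀ y ∈ t, ⟪y - Q, m⟫ = 0)
    (h : cross n m = 0) : SegParallel s t := by
  intro l₁ l₂ hl₁ hl₂ hsl htl
  rw [hl₁.direction_eq_span_rot90 hs.2.2.1 hsl hm
      fun y hy => inner_eq_zero_of_cross_eq_zero hn (hsn y hy) h,
    hl₂.direction_eq_span_rot90 ht.2.2.1 htl hm htm]

lemma IsPolygonal.exists_locallyHalfPlane_of_feasible {S : Set (Set ℝ²)}
    (hpoly : IsPolygonal B S) {A P : ℝ²} (hA : Feasible B S A) (hP : P ∈ frontier B)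
    (hPA : dist P A = 1) : ∃ n, LocallyHalfPlane B P n := by
  obtain ⟨r, hr, hPr⟩ := hpoly.boundary ▸ hP
  obtain ⟨n, hn, -⟩ :=
    hpoly.exists_locallyHalfPlane hP (hA.2.2 P (Metric.mem_sphere.2 hPA)) hr hPr
  exact ⟨n, hn⟩

/-- `P₁ = A + v` and `P₂ = A + (v - u)`, where `u = B₀ - A`, complete `A B₀` to the rhombus. -/
lemma C3.cross_eq_zero {S : Set (Set ℝ²)} (hC3 : C3 B) (hpoly : IsPolygonal B S) {A B₀ nA n₀ : ℝ²}
    (hA : Feasible B S A) (hlocA : LocallyHalfPlane B A nA) (hloc₀ : LocallyHalfPlane B B₀ n₀)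
    (hdist : dist A B₀ = 1) : cross nA n₀ = 0 := by
  by_contra hcross
  set u := B₀ - A
  have hu : ‖u‖ = 1 := by rwa [← dist_eq_norm, dist_comm]
  obtain ⟨v, hv, hvu⟩ := exists_norm_eq_one_and_norm_sub_eq_one hu
  have hB₀ : A + u = B₀ := add_sub_cancel A B₀
  have hA₁ : dist (A + v) A = 1 := by rwa [dist_eq_norm, add_sub_cancel_left]
  have h₀₁ : dist B₀ (A + v) = 1 := by
    rwa [← hB₀, dist_eq_norm, add_sub_add_left_eq_sub, norm_sub_rev]
  have h₁₂ : dist (A + v) (A + (v - u)) = 1 := by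
    rwa [dist_eq_norm, add_sub_add_left_eq_sub, sub_sub_cancel]
  have h₂A : dist (A + (v - u)) A = 1 := by rwa [dist_eq_norm, add_sub_cancel_left]
  obtain ⟨Z, O, hZA, hZ₀⟩ := exists_tangentNormalThrough hcross A B₀
  obtain ⟨n₁, hloc₁⟩ := hpoly.exists_locallyHalfPlane_of_feasible hA
    (hC3.mem_frontier_of_cross_ne_zero hlocA hloc₀ hcross hdist h₀₁ hA₁) hA₁
  have hZ₁ := hC3.tangentNormalThrough hlocA hloc₀ hloc₁ hcross hdist h₀₁ hA₁ hZA hZ₀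
  have hcross₁ : cross nA n₁ ≠ 0 := fun h => by
    rw [← hZA.eq_of_cross_eq_zero hZ₁ hlocA.ne_zero hloc₁.ne_zero h, dist_self] at hA₁
    exact zero_ne_one hA₁
  rw [dist_comm] at hA₁
  obtain ⟨n₂, hloc₂⟩ := hpoly.exists_locallyHalfPlane_of_feasible hA
    (hC3.mem_frontier_of_cross_ne_zero hlocA hloc₁ hcross₁ hA₁ h₁₂ h₂A) h₂A
  have hZ₂ := hC3.tangentNormalThrough hlocA hloc₁ hloc₂ hcross₁ hA₁ h₁₂ h₂A hZA hZ₁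
  exact false_of_rhombus_on_thales_circle hu hv hvu (hZA.inner_eq_zero hlocA.ne_zero)
    (hB₀ ▸ hZ₀.inner_eq_zero hloc₀.ne_zero) (hZ₁.inner_eq_zero hloc₁.ne_zero)
    (hZ₂.inner_eq_zero hloc₂.ne_zero)

end

noncomputable section

theorem stmt13 (B : Set (EuclideanSpace ℝ (Fin 2))) (S : Set (Set (EuclideanSpace ℝ (Fin 2))))
    (hpoly : IsPolygonal B S) (hC3 : C3 B)
    (A : EuclideanSpace ℝ (Fin 2)) (hA : Feasible B S A)
    (s : Set (EuclideanSpace ℝ (Fin 2))) (hs : s ∈ S) (hAs : A ∈ s)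
    (B₀ : EuclideanSpace ℝ (Fin 2)) (hB₀ : B₀ ∈ frontier B) (hdist : dist A B₀ = 1)
    (t : Set (EuclideanSpace ℝ (Fin 2))) (ht : t ∈ S) (hB₀t : B₀ ∈ t) :
    SegParallel s t := by
  obtain ⟨nA, hlocA, hsA⟩ := hpoly.exists_locallyHalfPlane hA.1 hA.2.1 hs hAs
  have hB₀v : ¬IsVertex S B₀ := hA.2.2 B₀ (by rwa [Metric.mem_sphere, dist_comm])
  obtain ⟨n₀, hloc₀, ht₀⟩ := hpoly.exists_locallyHalfPlane hB₀ hB₀v ht hB₀t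
  exact segParallel_of_cross_eq_zero (hpoly.seg s hs) (hpoly.seg t ht) hlocA.ne_zero
    hloc₀.ne_zero hsA ht₀ (hC3.cross_eq_zero hpoly hA hlocA hloc₀ hdist)

end
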